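/- Let q, l, k, p, n be even positive integers with q < l < k < p < n, k − l − q < 0 and n−p+k−q < p−l. Let the group G = (ℤ/2)³ act on R₃ × S¹ × S¹ × S¹ as follows: the first generator sends (u, z_1, z_2, z_3) to (ε_l(u), −z_1, z_2, z_3), where ε_l negates the coordinates u_1,…,u_l and u_{p+1},…,u_n; the second generator sends (u, z_1, z_2, z_3) to (ε_k(u), z_1, −z_2, z_3), where ε_k negates the coordinates u_1,…,u_q and u_{l+1},…,u_k; the third generator sends (u, z_1, z_2, z_3) to (ε_p(u), z_1, z_2, −z_3), where ε_p negates the coordinates u_1,…,u_q and u_{k+1},…,u_p. Then the orbit space (R₃ × S¹ × S¹ × S¹)/G is homeomorphic to S^{n−p+k−q−1} × S^{p−k−1} × S^{q−1} × S¹ × S¹ × S¹. -/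

import Mathlib

/-!
Write `T³ = S¹ × S¹ × S¹`. As `q, l, k, p, n` are even, the coordinates of `ℝⁿ` pair up into
complex coordinates, and `T³` acts on `ℝⁿ` by rotating the pairs in the blocks
`[q, l) ∪ [p, n)`, `[l, k)` and `[k, p)` by its three factors and the pairs in `[0, q)` by their
product. The action preserves the norm of every block, hence `R₃`, and the three generators of
`(ℤ/2)³` act as `(u, z) ↦ (ε • u, ε z)` for the three generators `ε` of the 2-torsion of `T³`.
So `(u, z) ↦ (z⁻¹ • u, z²)` descends to a continuous bijection from the compact orbit space
onto `R₃ × T³`.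

In terms of block norms the equations of `R₃` say that `‖u_{[q,k) ∪ [p,n)}‖² = n - p + k - q`,
`‖u_{[0,q)}‖² = ‖u_{[l,k)}‖² + (l + q - k)` and `‖u_{[k,p)}‖² = p - l - ‖u_{[l,k)}‖²`, and the
inequalities make all three right-hand sides positive. Normalizing the blocks `[q,k) ∪ [p,n)`,
`[k,p)` and `[0,q)` is therefore a homeomorphism from `R₃` onto
`S^{n-p+k-q-1} × S^{p-k-1} × S^{q-1}`, with inverse rescaling the three unit vectors by the
square roots of these right-hand sides.
-/

open Metric

/-- The intersection of three quadrics in ℝⁿ associated to a product of three simplices: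
`(u₁²+⋯+u_q²) + (u_{q+1}²+⋯+u_l²) + (u_{p+1}²+⋯+u_n²) = n-p+l`,
`-(u₁²+⋯+u_q²) + (u_{l+1}²+⋯+u_k²) = k-l-q`,
`(u₁²+⋯+u_q²) + (u_{k+1}²+⋯+u_p²) = p-k+q`. -/
def quadR3 (q l k p n : ℕ) : Set (EuclideanSpace ℝ (Fin n)) :=
  {u | (∑ j : Fin n, if (j : ℕ) < l ∨ p ≤ (j : ℕ) then u j ^ 2 else 0) = (n : ℝ) - p + l ∧
       (∑ j : Fin n, if (j : ℕ) < q then -(u j ^ 2)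
          else if l ≤ (j : ℕ) ∧ (j : ℕ) < k then u j ^ 2 else 0) = (k : ℝ) - l - q ∧
       (∑ j : Fin n, if (j : ℕ) < q ∨ (k ≤ (j : ℕ) ∧ (j : ℕ) < p) then u j ^ 2 else 0)
          = (p : ℝ) - k + q}

/-- The total space `R₃ × S¹ × S¹ × S¹`, with `S¹ ⊂ ℂ` the unit circle. -/
abbrev totalSpace5 (q l k p n : ℕ) : Type :=
  {x : EuclideanSpace ℝ (Fin n) × ℂ × ℂ × ℂ //
    x.1 ∈ quadR3 q l k p n ∧ x.2.1 ∈ sphere (0 : ℂ) 1 ∧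
    x.2.2.1 ∈ sphere (0 : ℂ) 1 ∧ x.2.2.2 ∈ sphere (0 : ℂ) 1}

/-- First generator of `(ℤ/2)³`: `(u, z₁, z₂, z₃) ↦ (ε_l u, -z₁, z₂, z₃)`,
where `ε_l` negates the coordinates `u₁, …, u_l` and `u_{p+1}, …, u_n`. -/
def gen5₁ (q l k p n : ℕ) :
    EuclideanSpace ℝ (Fin n) × ℂ × ℂ × ℂ → EuclideanSpace ℝ (Fin n) × ℂ × ℂ × ℂ :=
  fun x => (WithLp.toLp 2 (fun (j : Fin n) => if (j : ℕ) < l ∨ p ≤ (j : ℕ) then -x.1 j else x.1 j),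
    -x.2.1, x.2.2.1, x.2.2.2)

/-- Second generator of `(ℤ/2)³`: `(u, z₁, z₂, z₃) ↦ (ε_k u, z₁, -z₂, z₃)`,
where `ε_k` negates the coordinates `u₁, …, u_q` and `u_{l+1}, …, u_k`. -/
def gen5₂ (q l k p n : ℕ) :
    EuclideanSpace ℝ (Fin n) × ℂ × ℂ × ℂ → EuclideanSpace ℝ (Fin n) × ℂ × ℂ × ℂ :=
  fun x => (WithLp.toLp 2 (fun (j : Fin n) => if (j : ℕ) < q ∨ (l ≤ (j : ℕ) ∧ (j : ℕ) < k) then -x.1 j else x.1 j),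
    x.2.1, -x.2.2.1, x.2.2.2)

/-- Third generator of `(ℤ/2)³`: `(u, z₁, z₂, z₃) ↦ (ε_p u, z₁, z₂, -z₃)`,
where `ε_p` negates the coordinates `u₁, …, u_q` and `u_{k+1}, …, u_p`. -/
def gen5₃ (q l k p n : ℕ) :
    EuclideanSpace ℝ (Fin n) × ℂ × ℂ × ℂ → EuclideanSpace ℝ (Fin n) × ℂ × ℂ × ℂ :=
  fun x => (WithLp.toLp 2 (fun (j : Fin n) => if (j : ℕ) < q ∨ (k ≤ (j : ℕ) ∧ (j : ℕ) < p) then -x.1 j else x.1 j),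
    x.2.1, x.2.2.1, -x.2.2.2)

/-- The orbit relation of the `(ℤ/2)³`-action generated by `gen5₁`, `gen5₂`, `gen5₃`. -/
def orbitRel5 (q l k p n : ℕ) : totalSpace5 q l k p n → totalSpace5 q l k p n → Prop :=
  fun a b => ∃ s₁ s₂ s₃ : Bool,
    b.val = (cond s₁ (gen5₁ q l k p n) id)
      ((cond s₂ (gen5₂ q l k p n) id) ((cond s₃ (gen5₃ q l k p n) id) a.val))

noncomputable section

open Finset

section Untwist

variable {T X : Type*} [CommGroup T] [MulAction T X]

def untwist (x : X × T) : X × T := (x.2⁻¹ • x.1, x.2 ^ 2)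

theorem untwist_smul_mk (x : X) (z : T) : untwist (z • x, z) = (x, z ^ 2) := by
  simp [untwist]

theorem untwist_eq_untwist_iff {x y : X × T} :
    untwist x = untwist y ↔ ∃ ε : T, ε ^ 2 = 1 ∧ y = (ε • x.1, ε * x.2) := by
  obtain ⟨u, z⟩ := x
  obtain ⟨v, w⟩ := y
  simp only [untwist, Prod.mk.injEq]
  constructor
  · rintro ⟨huv, hzw⟩
    refine ⟨w * z⁻¹, by rw [mul_pow, ← hzw, inv_pow, mul_inv_cancel], ?_, by simp⟩
    rw [mul_smul, huv, smul_inv_smul]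
  · rintro ⟨ε, hε, rfl, rfl⟩
    refine ⟨?_, by rw [mul_pow, hε, one_mul]⟩
    rw [mul_inv_rev, mul_smul, inv_smul_smul]

end Untwist

section UnitCircle

theorem exists_sq_eq_of_unitSphere (w : sphere (0 : ℂ) 1) : ∃ z : sphere (0 : ℂ) 1, z ^ 2 = w := by
  obtain ⟨z, hz⟩ := IsAlgClosed.exists_pow_nat_eq (w : ℂ) two_pos
  have hnorm : ‖z‖ = 1 := by
    have h : ‖z‖ ^ 2 = 1 := by rw [← norm_pow, hz, norm_eq_of_mem_sphere]
    exact (pow_eq_one_iff_of_nonneg (norm_nonneg z) two_ne_zero).mp h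
  exact ⟨⟨z, mem_sphere_zero_iff_norm.mpr hnorm⟩, Subtype.ext (by simpa using hz)⟩

theorem unitSphere_sq_eq_one_iff (z : sphere (0 : ℂ) 1) : z ^ 2 = 1 ↔ z = 1 ∨ z = -1 := by
  simp only [Subtype.ext_iff, unitSphere.coe_pow, unitSphere.coe_one]
  exact sq_eq_one_iff

theorem unitSphere_sq_eq_one_iff_exists_cond (z : sphere (0 : ℂ) 1) :
    z ^ 2 = 1 ↔ ∃ s : Bool, z = cond s (-1) 1 := by
  rw [unitSphere_sq_eq_one_iff]
  constructor
  · rintro (rfl | rfl)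
    exacts [⟨false, rfl⟩, ⟨true, rfl⟩]
  · rintro ⟨_ | _, rfl⟩
    exacts [Or.inl rfl, Or.inr rfl]

end UnitCircle

section ComplexPairs

def toPairs (f : ℕ → ℝ) (i : ℕ) : ℂ := ⟨f (2 * i), f (2 * i + 1)⟩

def ofPairs (g : ℕ → ℂ) (j : ℕ) : ℝ := if Even j then (g (j / 2)).re else (g (j / 2)).im

@[simp]
theorem toPairs_ofPairs (g : ℕ → ℂ) : toPairs (ofPairs g) = g := by
  funext i
  apply Complex.ext <;> simp [toPairs, ofPairs, Nat.mul_add_div]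

@[simp]
theorem ofPairs_toPairs (f : ℕ → ℝ) : ofPairs (toPairs f) = f := by
  funext j
  rcases Nat.even_or_odd' j with ⟨i, rfl | rfl⟩ <;>
    simp [ofPairs, toPairs, Nat.mul_add_div]

def rotatePairs (ζ : ℕ → ℂ) (f : ℕ → ℝ) : ℕ → ℝ := ofPairs (ζ * toPairs f)

theorem rotatePairs_mul (ζ ζ' : ℕ → ℂ) (f : ℕ → ℝ) :
    rotatePairs (ζ * ζ') f = rotatePairs ζ (rotatePairs ζ' f) := by
  simp [rotatePairs, mul_assoc]

theorem rotatePairs_one (f : ℕ → ℝ) : rotatePairs 1 f = f := by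
  simp [rotatePairs]

theorem rotatePairs_apply_of_im_eq_zero {ζ : ℕ → ℂ} (hζ : ∀ i, (ζ i).im = 0) (f : ℕ → ℝ)
    (j : ℕ) : rotatePairs ζ f j = (ζ (j / 2)).re * f j := by
  rcases Nat.even_or_odd' j with ⟨i, rfl | rfl⟩ <;>
    simp [rotatePairs, ofPairs, toPairs, hζ, Nat.mul_add_div]

theorem rotatePairs_eq_zero_of_le {f : ℕ → ℝ} {n : ℕ} (hn : Even n) (hf : ∀ j, n ≤ j → f j = 0)
    (ζ : ℕ → ℂ) {j : ℕ} (hj : n ≤ j) : rotatePairs ζ f j = 0 := by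
  have hpair : toPairs f (j / 2) = 0 := by
    obtain ⟨m, rfl⟩ := hn
    apply Complex.ext <;> simp [toPairs] <;> exact hf _ (by omega)
  simp [rotatePairs, ofPairs, hpair]

theorem sum_range_two_mul_sq (f : ℕ → ℝ) (b : ℕ) :
    ∑ j ∈ range (2 * b), f j ^ 2 = ∑ i ∈ range b, Complex.normSq (toPairs f i) := by
  induction b with
  | zero => simp
  | succ b ih =>
    rw [show 2 * (b + 1) = 2 * b + 1 + 1 by ring, sum_range_succ, sum_range_succ, ih,
      sum_range_succ, Complex.normSq_mk, add_assoc, toPairs]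
    ring

theorem sum_Ico_sq_rotatePairs {ζ : ℕ → ℂ} (hζ : ∀ i, Complex.normSq (ζ i) = 1) (f : ℕ → ℝ)
    {s e : ℕ} (hs : Even s) (he : Even e) :
    ∑ j ∈ Ico s e, rotatePairs ζ f j ^ 2 = ∑ j ∈ Ico s e, f j ^ 2 := by
  have hrange : ∀ m, Even m →
      ∑ j ∈ range m, rotatePairs ζ f j ^ 2 = ∑ j ∈ range m, f j ^ 2 := by
    rintro m ⟨b, rfl⟩
    simp [← two_mul, sum_range_two_mul_sq, rotatePairs, hζ]
  rcases le_total s e with hse | hes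
  · have h₁ := sum_range_add_sum_Ico (fun j => rotatePairs ζ f j ^ 2) hse
    have h₂ := sum_range_add_sum_Ico (fun j => f j ^ 2) hse
    linarith [hrange s hs, hrange e he]
  · simp [Ico_eq_empty_of_le hes]

end ComplexPairs

section ZeroExtension

variable {n : ℕ}

def zeroExtend (u : EuclideanSpace ℝ (Fin n)) (j : ℕ) : ℝ := if h : j < n then u ⟨j, h⟩ else 0

@[simp]
theorem zeroExtend_val (u : EuclideanSpace ℝ (Fin n)) (j : Fin n) : zeroExtend u j = u j := by
  simp [zeroExtend]

theorem zeroExtend_of_le (u : EuclideanSpace ℝ (Fin n)) {j : ℕ} (hj : n ≤ j) :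
    zeroExtend u j = 0 := by
  simp [zeroExtend, not_lt.mpr hj]

theorem zeroExtend_toLp (v : Fin n → ℝ) {j : ℕ} (hj : j < n) :
    zeroExtend (WithLp.toLp 2 v) j = v ⟨j, hj⟩ := by
  simp [zeroExtend, hj]

@[fun_prop]
theorem continuous_zeroExtend (j : ℕ) :
    Continuous fun u : EuclideanSpace ℝ (Fin n) => zeroExtend u j := by
  unfold zeroExtend
  split_ifs <;> fun_prop

theorem norm_sq_eq_sum_zeroExtend (u : EuclideanSpace ℝ (Fin n)) :
    ‖u‖ ^ 2 = ∑ j ∈ range n, zeroExtend u j ^ 2 := by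
  simp [EuclideanSpace.norm_sq_eq, ← Fin.sum_univ_eq_sum_range (fun j => zeroExtend u j ^ 2)]

end ZeroExtension

section Quadric

variable {q l k p n : ℕ}

def blockSq (f : ℕ → ℝ) (s e : ℕ) : ℝ := ∑ j ∈ Ico s e, f j ^ 2

theorem blockSq_nonneg (f : ℕ → ℝ) (s e : ℕ) : 0 ≤ blockSq f s e :=
  sum_nonneg fun _ _ => sq_nonneg _

theorem blockSq_add (f : ℕ → ℝ) {s t e : ℕ} (hst : s ≤ t) (hte : t ≤ e) :
    blockSq f s t + blockSq f t e = blockSq f s e :=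
  sum_Ico_consecutive _ hst hte

theorem blockSq_eq_sum_range_ite (f : ℕ → ℝ) (s : ℕ) {e n : ℕ} (he : e ≤ n) :
    blockSq f s e = ∑ j ∈ range n, if s ≤ j ∧ j < e then f j ^ 2 else 0 := by
  rw [← sum_filter, blockSq]
  congr 1
  ext j
  simp only [mem_Ico, mem_filter, mem_range]
  omega

theorem mem_quadR3_iff (hql : q ≤ l) (hlk : l ≤ k) (hkp : k ≤ p) (hpn : p ≤ n)
    (u : EuclideanSpace ℝ (Fin n)) :
    u ∈ quadR3 q l k p n ↔
      blockSq (zeroExtend u) q l + blockSq (zeroExtend u) l k + blockSq (zeroExtend u) p n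
          = (n : ℝ) - p + k - q ∧
        blockSq (zeroExtend u) 0 q = blockSq (zeroExtend u) l k + ((l : ℝ) + q - k) ∧
        blockSq (zeroExtend u) k p = (p : ℝ) - l - blockSq (zeroExtend u) l k := by
  set f := zeroExtend u
  have hfin (F : ℕ → ℝ) : ∑ j : Fin n, F j = ∑ j ∈ range n, F j := Fin.sum_univ_eq_sum_range F n
  have e₁ : (∑ j : Fin n, if (j : ℕ) < l ∨ p ≤ (j : ℕ) then u j ^ 2 else 0)
      = blockSq f 0 q + blockSq f q l + blockSq f p n := by
    rw [blockSq_eq_sum_range_ite f 0 (by omega : q ≤ n),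
      blockSq_eq_sum_range_ite f q (by omega : l ≤ n),
      blockSq_eq_sum_range_ite f p (le_refl n), ← sum_add_distrib, ← sum_add_distrib, ← hfin]
    refine sum_congr rfl fun j _ => ?_
    simp only [f, zeroExtend_val]
    split_ifs <;> first | omega | ring
  have e₂ : (∑ j : Fin n, if (j : ℕ) < q then -(u j ^ 2)
        else if l ≤ (j : ℕ) ∧ (j : ℕ) < k then u j ^ 2 else 0)
      = -blockSq f 0 q + blockSq f l k := by
    rw [blockSq_eq_sum_range_ite f 0 (by omega : q ≤ n),
      blockSq_eq_sum_range_ite f l (by omega : k ≤ n), ← sum_neg_distrib,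
      ← sum_add_distrib, ← hfin]
    refine sum_congr rfl fun j _ => ?_
    simp only [f, zeroExtend_val]
    split_ifs <;> first | omega | ring
  have e₃ : (∑ j : Fin n, if (j : ℕ) < q ∨ (k ≤ (j : ℕ) ∧ (j : ℕ) < p) then u j ^ 2 else 0)
      = blockSq f 0 q + blockSq f k p := by
    rw [blockSq_eq_sum_range_ite f 0 (by omega : q ≤ n),
      blockSq_eq_sum_range_ite f k (by omega : p ≤ n), ← sum_add_distrib, ← hfin]
    refine sum_congr rfl fun j _ => ?_
    simp only [f, zeroExtend_val]
    split_ifs <;> first | omega | ring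
  rw [quadR3, Set.mem_ofPred_eq, e₁, e₂, e₃]
  constructor
  · rintro ⟨h₁, h₂, h₃⟩
    refine ⟨?_, ?_, ?_⟩ <;> linarith
  · rintro ⟨h₁, h₂, h₃⟩
    refine ⟨?_, ?_, ?_⟩ <;> linarith

end Quadric

section Blocks

variable {q l k p n : ℕ}

def outerIndex (q k p j : ℕ) : ℕ := if j < k - q then q + j else p + (j - (k - q))

def headBlock (q : ℕ) (u : EuclideanSpace ℝ (Fin n)) : EuclideanSpace ℝ (Fin q) :=
  WithLp.toLp 2 fun j => zeroExtend u j

def midBlock (k p : ℕ) (u : EuclideanSpace ℝ (Fin n)) : EuclideanSpace ℝ (Fin (p - k)) :=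
  WithLp.toLp 2 fun j => zeroExtend u (k + j)

def outerBlock (q k p : ℕ) (u : EuclideanSpace ℝ (Fin n)) :
    EuclideanSpace ℝ (Fin (n - p + k - q)) :=
  WithLp.toLp 2 fun j => zeroExtend u (outerIndex q k p j)

def assemble (a : EuclideanSpace ℝ (Fin q)) (w : EuclideanSpace ℝ (Fin (n - p + k - q)))
    (d : EuclideanSpace ℝ (Fin (p - k))) : EuclideanSpace ℝ (Fin n) :=
  WithLp.toLp 2 fun j =>
    if (j : ℕ) < q then zeroExtend a j
    else if (j : ℕ) < k then zeroExtend w (j - q)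
    else if (j : ℕ) < p then zeroExtend d (j - k)
    else zeroExtend w (j - p + (k - q))

theorem norm_sq_toLp {m : ℕ} (g : ℕ → ℝ) :
    ‖(WithLp.toLp 2 fun j : Fin m => g j : EuclideanSpace ℝ (Fin m))‖ ^ 2
      = ∑ j ∈ range m, g j ^ 2 := by
  rw [EuclideanSpace.norm_sq_eq, ← Fin.sum_univ_eq_sum_range (fun j => g j ^ 2)]
  simp

theorem norm_sq_headBlock (u : EuclideanSpace ℝ (Fin n)) :
    ‖headBlock q u‖ ^ 2 = blockSq (zeroExtend u) 0 q := by
  rw [headBlock, norm_sq_toLp, blockSq, range_eq_Ico]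

theorem norm_sq_midBlock (u : EuclideanSpace ℝ (Fin n)) :
    ‖midBlock k p u‖ ^ 2 = blockSq (zeroExtend u) k p := by
  rw [midBlock, norm_sq_toLp (fun j => zeroExtend u (k + j)), blockSq, sum_Ico_eq_sum_range]

theorem norm_sq_outerBlock (hqk : q ≤ k) (hpn : p ≤ n)
    (u : EuclideanSpace ℝ (Fin n)) :
    ‖outerBlock q k p u‖ ^ 2 = blockSq (zeroExtend u) q k + blockSq (zeroExtend u) p n := by
  rw [outerBlock, norm_sq_toLp (fun j => zeroExtend u (outerIndex q k p j)),
    ← sum_range_add_sum_Ico _ (by omega : k - q ≤ n - p + k - q), blockSq, blockSq,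
    sum_Ico_eq_sum_range, sum_Ico_eq_sum_range, sum_Ico_eq_sum_range]
  congr 1
  · refine sum_congr (by rfl) fun j hj => ?_
    rw [mem_range] at hj
    rw [outerIndex, if_pos hj]
  · rw [show n - p + k - q - (k - q) = n - p by omega]
    refine sum_congr rfl fun j _ => ?_
    rw [outerIndex, if_neg (by omega), Nat.add_sub_cancel_left]

theorem blockSq_outerBlock (hql : q ≤ l) (hlk : l ≤ k) (hpn : p ≤ n)
    (u : EuclideanSpace ℝ (Fin n)) :
    blockSq (zeroExtend (outerBlock q k p u)) (l - q) (k - q) = blockSq (zeroExtend u) l k := by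
  rw [blockSq, blockSq, sum_Ico_eq_sum_range, sum_Ico_eq_sum_range,
    show k - q - (l - q) = k - l by omega]
  refine sum_congr rfl fun j hj => ?_
  rw [mem_range] at hj
  rw [outerBlock, zeroExtend_toLp _ (by omega)]
  dsimp only
  rw [outerIndex, if_pos (by omega)]
  congr 2
  omega

theorem zeroExtend_assemble (a : EuclideanSpace ℝ (Fin q))
    (w : EuclideanSpace ℝ (Fin (n - p + k - q))) (d : EuclideanSpace ℝ (Fin (p - k)))
    {j : ℕ} (hj : j < n) :
    zeroExtend (assemble a w d) j =
      if j < q then zeroExtend a j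
      else if j < k then zeroExtend w (j - q)
      else if j < p then zeroExtend d (j - k)
      else zeroExtend w (j - p + (k - q)) :=
  zeroExtend_toLp _ hj

theorem headBlock_assemble (hqk : q ≤ k) (hkp : k ≤ p) (hpn : p ≤ n)
    (a : EuclideanSpace ℝ (Fin q)) (w : EuclideanSpace ℝ (Fin (n - p + k - q)))
    (d : EuclideanSpace ℝ (Fin (p - k))) : headBlock q (assemble a w d) = a := by
  ext j
  simp [headBlock, zeroExtend_assemble _ _ _ (by omega : (j : ℕ) < n)]

theorem midBlock_assemble (hqk : q ≤ k) (hkp : k ≤ p) (hpn : p ≤ n)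
    (a : EuclideanSpace ℝ (Fin q)) (w : EuclideanSpace ℝ (Fin (n - p + k - q)))
    (d : EuclideanSpace ℝ (Fin (p - k))) : midBlock k p (assemble a w d) = d := by
  ext j
  have hj := j.isLt
  simp [midBlock, zeroExtend_assemble _ _ _ (by omega : k + (j : ℕ) < n),
    show ¬ k + (j : ℕ) < q by omega, show k + (j : ℕ) < p by omega]

theorem outerBlock_assemble (hqk : q ≤ k) (hkp : k ≤ p) (hpn : p ≤ n)
    (a : EuclideanSpace ℝ (Fin q)) (w : EuclideanSpace ℝ (Fin (n - p + k - q)))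
    (d : EuclideanSpace ℝ (Fin (p - k))) : outerBlock q k p (assemble a w d) = w := by
  ext j
  have hj := j.isLt
  simp only [outerBlock, PiLp.toLp_apply, outerIndex]
  split_ifs with h
  · rw [zeroExtend_assemble _ _ _ (by omega), if_neg (by omega), if_pos (by omega)]
    simp
  · rw [zeroExtend_assemble _ _ _ (by omega), if_neg (by omega), if_neg (by omega),
      if_neg (by omega), show p + (j - (k - q)) - p + (k - q) = j by omega]
    simp

theorem assemble_blocks (hqk : q ≤ k) (hkp : k ≤ p) (hpn : p ≤ n)
    (u : EuclideanSpace ℝ (Fin n)) :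
    assemble (headBlock q u) (outerBlock q k p u) (midBlock k p u) = u := by
  ext j
  have hj := j.isLt
  rw [← zeroExtend_val (assemble _ _ _) j, ← zeroExtend_val u j, zeroExtend_assemble _ _ _ hj]
  split_ifs with h₁ h₂ h₃
  · simp [headBlock, zeroExtend_toLp _ h₁]
  · rw [outerBlock, zeroExtend_toLp _ (by omega)]
    dsimp only
    rw [outerIndex, if_pos (by omega)]
    congr 1; omega
  · rw [midBlock, zeroExtend_toLp _ (by omega)]
    dsimp only
    congr 1; omega
  · rw [outerBlock, zeroExtend_toLp _ (by omega)]
    dsimp only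
    rw [outerIndex, if_neg (by omega)]
    congr 1; omega

@[fun_prop]
theorem continuous_headBlock : Continuous (headBlock q : EuclideanSpace ℝ (Fin n) → _) := by
  unfold headBlock
  fun_prop

@[fun_prop]
theorem continuous_midBlock : Continuous (midBlock k p : EuclideanSpace ℝ (Fin n) → _) := by
  unfold midBlock
  fun_prop

@[fun_prop]
theorem continuous_outerBlock : Continuous (outerBlock q k p : EuclideanSpace ℝ (Fin n) → _) := by
  unfold outerBlock
  fun_prop

theorem continuous_assemble :
    Continuous fun x : EuclideanSpace ℝ (Fin q) × EuclideanSpace ℝ (Fin (n - p + k - q)) ×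
        EuclideanSpace ℝ (Fin (p - k)) =>
      (assemble x.1 x.2.1 x.2.2 : EuclideanSpace ℝ (Fin n)) := by
  unfold assemble
  refine (PiLp.continuous_toLp 2 _).comp (continuous_pi fun j => ?_)
  split_ifs <;> fun_prop

end Blocks

section Chart

variable {q l k p n : ℕ}

abbrev SphereTriple (q k p n : ℕ) : Type :=
  sphere (0 : EuclideanSpace ℝ (Fin (n - p + k - q))) 1 ×
    sphere (0 : EuclideanSpace ℝ (Fin (p - k))) 1 × sphere (0 : EuclideanSpace ℝ (Fin q)) 1

theorem blockSq_zeroExtend_smul {m : ℕ} (c : ℝ) (w : EuclideanSpace ℝ (Fin m)) (s e : ℕ) :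
    blockSq (zeroExtend (c • w)) s e = c ^ 2 * blockSq (zeroExtend w) s e := by
  simp only [blockSq, mul_sum]
  refine sum_congr rfl fun j _ => ?_
  by_cases hj : j < m
  · simp [zeroExtend, hj, mul_pow]
  · simp [zeroExtend, hj]

theorem blockSq_zeroExtend_le_norm_sq {m : ℕ} (w : EuclideanSpace ℝ (Fin m)) (s : ℕ) {e : ℕ}
    (he : e ≤ m) : blockSq (zeroExtend w) s e ≤ ‖w‖ ^ 2 := by
  rw [norm_sq_eq_sum_zeroExtend, blockSq]
  exact sum_le_sum_of_subset_of_nonneg (fun j hj => by simp at hj ⊢; omega)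
    fun _ _ _ => sq_nonneg _

theorem ne_zero_of_norm_sq_pos {E : Type*} [NormedAddCommGroup E] {v : E} (hv : 0 < ‖v‖ ^ 2) :
    v ≠ 0 := by
  rintro rfl
  simp at hv

theorem norm_sq_smul_of_mem_sphere {E : Type*} [NormedAddCommGroup E] [NormedSpace ℝ E]
    (c : ℝ) {v : E} (hv : v ∈ sphere (0 : E) 1) : ‖c • v‖ ^ 2 = c ^ 2 := by
  rw [norm_smul, mem_sphere_zero_iff_norm.mp hv, mul_one, Real.norm_eq_abs, sq_abs]

theorem inv_norm_smul_smul_of_mem_sphere {E : Type*} [NormedAddCommGroup E] [NormedSpace ℝ E]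
    {c : ℝ} (hc : 0 < c) {v : E} (hv : v ∈ sphere (0 : E) 1) : ‖c • v‖⁻¹ • c • v = v := by
  rw [norm_smul, mem_sphere_zero_iff_norm.mp hv, mul_one, Real.norm_of_nonneg hc.le,
    inv_smul_smul₀ hc.ne']

theorem mem_quadR3_iff_blocks (hql : q ≤ l) (hlk : l ≤ k) (hkp : k ≤ p) (hpn : p ≤ n)
    (u : EuclideanSpace ℝ (Fin n)) :
    u ∈ quadR3 q l k p n ↔
      ‖outerBlock q k p u‖ ^ 2 = (n : ℝ) - p + k - q ∧
        ‖headBlock q u‖ ^ 2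
          = blockSq (zeroExtend (outerBlock q k p u)) (l - q) (k - q) + ((l : ℝ) + q - k) ∧
        ‖midBlock k p u‖ ^ 2
          = (p : ℝ) - l - blockSq (zeroExtend (outerBlock q k p u)) (l - q) (k - q) := by
  rw [mem_quadR3_iff hql hlk hkp hpn, norm_sq_outerBlock (hql.trans hlk) hpn,
    norm_sq_headBlock, norm_sq_midBlock, blockSq_outerBlock hql hlk hpn,
    ← blockSq_add _ hql hlk]

/-- The value of `‖u_{[l,k)}‖²` at the point `u ∈ R₃` whose first sphere coordinate is `w`. -/
def innerWeight (q l k p n : ℕ) (w : EuclideanSpace ℝ (Fin (n - p + k - q))) : ℝ :=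
  ((n : ℝ) - p + k - q) * blockSq (zeroExtend w) (l - q) (k - q)

structure Admissible (q l k p n : ℕ) : Prop where
  q_lt_l : q < l
  l_lt_k : l < k
  k_lt_p : k < p
  p_lt_n : p < n
  k_lt_l_add_q : k < l + q
  add_lt : n + k + l < 2 * p + q

namespace Admissible

theorem real_bounds (h : Admissible q l k p n) :
    0 < (n : ℝ) - p + k - q ∧ (n : ℝ) - p + k - q < p - l ∧ 0 < (l : ℝ) + q - k := by
  have hqk : (q : ℝ) < k := by exact_mod_cast h.q_lt_l.trans h.l_lt_k
  have hpn : (p : ℝ) < n := by exact_mod_cast h.p_lt_n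
  have hklq : (k : ℝ) < l + q := by exact_mod_cast h.k_lt_l_add_q
  have hadd : (n : ℝ) + k + l < 2 * p + q := by exact_mod_cast h.add_lt
  exact ⟨by linarith, by linarith, by linarith⟩

theorem norm_sq_blocks_pos (h : Admissible q l k p n) {u : EuclideanSpace ℝ (Fin n)}
    (hu : u ∈ quadR3 q l k p n) :
    0 < ‖outerBlock q k p u‖ ^ 2 ∧ 0 < ‖midBlock k p u‖ ^ 2 ∧ 0 < ‖headBlock q u‖ ^ 2 := by
  obtain ⟨h₁, h₂, h₃⟩ := (mem_quadR3_iff_blocks h.q_lt_l.le h.l_lt_k.le h.k_lt_p.le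
    h.p_lt_n.le u).mp hu
  have hC₀ := blockSq_nonneg (zeroExtend (outerBlock q k p u)) (l - q) (k - q)
  have hC₁ := blockSq_zeroExtend_le_norm_sq (outerBlock q k p u) (l - q)
    (by omega : k - q ≤ n - p + k - q)
  obtain ⟨hN, hNpl, hlqk⟩ := h.real_bounds
  exact ⟨by linarith, by linarith, by linarith⟩

def toSpheres (h : Admissible q l k p n) (u : quadR3 q l k p n) : SphereTriple q k p n :=
  (⟨‖outerBlock q k p u.1‖⁻¹ • outerBlock q k p u.1, mem_sphere_zero_iff_norm.mpr <|
      norm_smul_inv_norm (ne_zero_of_norm_sq_pos (h.norm_sq_blocks_pos u.2).1)⟩,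
    ⟨‖midBlock k p u.1‖⁻¹ • midBlock k p u.1, mem_sphere_zero_iff_norm.mpr <|
      norm_smul_inv_norm (ne_zero_of_norm_sq_pos (h.norm_sq_blocks_pos u.2).2.1)⟩,
    ⟨‖headBlock q u.1‖⁻¹ • headBlock q u.1, mem_sphere_zero_iff_norm.mpr <|
      norm_smul_inv_norm (ne_zero_of_norm_sq_pos (h.norm_sq_blocks_pos u.2).2.2)⟩)

theorem innerWeight_mem_Icc (h : Admissible q l k p n)
    {w : EuclideanSpace ℝ (Fin (n - p + k - q))} (hw : w ∈ sphere 0 1) :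
    innerWeight q l k p n w ∈ Set.Icc 0 ((n : ℝ) - p + k - q) := by
  have hle := blockSq_zeroExtend_le_norm_sq w (l - q) (by omega : k - q ≤ n - p + k - q)
  rw [mem_sphere_zero_iff_norm.mp hw, one_pow] at hle
  have hN := h.real_bounds.1
  exact ⟨mul_nonneg hN.le (blockSq_nonneg _ _ _), mul_le_of_le_one_right hN.le hle⟩

theorem assemble_mem_quadR3 (h : Admissible q l k p n) (x : SphereTriple q k p n) :
    assemble (√(innerWeight q l k p n x.1 + ((l : ℝ) + q - k)) • (x.2.2 : EuclideanSpace ℝ (Fin q)))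
      (√((n : ℝ) - p + k - q) • (x.1 : EuclideanSpace ℝ (Fin (n - p + k - q))))
      (√((p : ℝ) - l - innerWeight q l k p n x.1) • (x.2.1 : EuclideanSpace ℝ (Fin (p - k))))
      ∈ quadR3 q l k p n := by
  obtain ⟨hN, hNpl, hlqk⟩ := h.real_bounds
  obtain ⟨hC₀, hC₁⟩ := h.innerWeight_mem_Icc x.1.2
  have hqk := h.q_lt_l.le.trans h.l_lt_k.le
  rw [mem_quadR3_iff_blocks h.q_lt_l.le h.l_lt_k.le h.k_lt_p.le h.p_lt_n.le,
    outerBlock_assemble hqk h.k_lt_p.le h.p_lt_n.le, midBlock_assemble hqk h.k_lt_p.le h.p_lt_n.le,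
    headBlock_assemble hqk h.k_lt_p.le h.p_lt_n.le, norm_sq_smul_of_mem_sphere _ x.1.2,
    norm_sq_smul_of_mem_sphere _ x.2.1.2, norm_sq_smul_of_mem_sphere _ x.2.2.2,
    blockSq_zeroExtend_smul, Real.sq_sqrt hN.le, Real.sq_sqrt (by linarith),
    Real.sq_sqrt (by linarith)]
  exact ⟨rfl, rfl, rfl⟩

def ofSpheres (h : Admissible q l k p n) (x : SphereTriple q k p n) : quadR3 q l k p n :=
  ⟨_, h.assemble_mem_quadR3 x⟩

theorem ofSpheres_toSpheres (h : Admissible q l k p n) (u : quadR3 q l k p n) :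
    h.ofSpheres (h.toSpheres u) = u := by
  obtain ⟨u, hu⟩ := u
  obtain ⟨h₁, h₂, h₃⟩ := (mem_quadR3_iff_blocks h.q_lt_l.le h.l_lt_k.le h.k_lt_p.le
    h.p_lt_n.le u).mp hu
  obtain ⟨ho, hm, hh⟩ := h.norm_sq_blocks_pos hu
  have hweight : innerWeight q l k p n (‖outerBlock q k p u‖⁻¹ • outerBlock q k p u)
      = blockSq (zeroExtend (outerBlock q k p u)) (l - q) (k - q) := by
    rw [innerWeight, blockSq_zeroExtend_smul, inv_pow, ← h₁, ← mul_assoc,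
      mul_inv_cancel₀ ho.ne', one_mul]
  apply Subtype.ext
  simp only [ofSpheres, toSpheres, hweight, ← h₁, ← h₂, ← h₃, Real.sqrt_sq (norm_nonneg _),
    smul_inv_smul₀ (norm_ne_zero_iff.mpr (ne_zero_of_norm_sq_pos ho)),
    smul_inv_smul₀ (norm_ne_zero_iff.mpr (ne_zero_of_norm_sq_pos hm)),
    smul_inv_smul₀ (norm_ne_zero_iff.mpr (ne_zero_of_norm_sq_pos hh))]
  exact assemble_blocks (h.q_lt_l.le.trans h.l_lt_k.le) h.k_lt_p.le h.p_lt_n.le u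

theorem toSpheres_ofSpheres (h : Admissible q l k p n) (x : SphereTriple q k p n) :
    h.toSpheres (h.ofSpheres x) = x := by
  obtain ⟨hN, hNpl, hlqk⟩ := h.real_bounds
  obtain ⟨hC₀, hC₁⟩ := h.innerWeight_mem_Icc x.1.2
  have hqk := h.q_lt_l.le.trans h.l_lt_k.le
  obtain ⟨⟨w, hw⟩, ⟨d, hd⟩, ⟨a, ha⟩⟩ := x
  simp only [toSpheres, ofSpheres, outerBlock_assemble hqk h.k_lt_p.le h.p_lt_n.le,
    midBlock_assemble hqk h.k_lt_p.le h.p_lt_n.le, headBlock_assemble hqk h.k_lt_p.le h.p_lt_n.le,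
    inv_norm_smul_smul_of_mem_sphere (Real.sqrt_pos.mpr hN) hw,
    inv_norm_smul_smul_of_mem_sphere (Real.sqrt_pos.mpr (by linarith : 0 < (p : ℝ) - l -
      innerWeight q l k p n w)) hd,
    inv_norm_smul_smul_of_mem_sphere (Real.sqrt_pos.mpr (by linarith : 0 <
      innerWeight q l k p n w + ((l : ℝ) + q - k))) ha]

theorem continuous_toSpheres (h : Admissible q l k p n) : Continuous h.toSpheres := by
  have hnorm {m : ℕ} {f : quadR3 q l k p n → EuclideanSpace ℝ (Fin m)} (hf : Continuous f)
      (hf₀ : ∀ u, 0 < ‖f u‖ ^ 2) : Continuous fun u => ‖f u‖⁻¹ • f u :=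
    (hf.norm.inv₀ fun u => norm_ne_zero_iff.mpr (ne_zero_of_norm_sq_pos (hf₀ u))).smul hf
  refine .prodMk (.subtype_mk ?_ _) (.prodMk (.subtype_mk ?_ _) (.subtype_mk ?_ _))
  · exact hnorm (by fun_prop) fun u => (h.norm_sq_blocks_pos u.2).1
  · exact hnorm (by fun_prop) fun u => (h.norm_sq_blocks_pos u.2).2.1
  · exact hnorm (by fun_prop) fun u => (h.norm_sq_blocks_pos u.2).2.2

theorem continuous_ofSpheres (h : Admissible q l k p n) : Continuous h.ofSpheres := by
  have hweight : Continuous fun w : EuclideanSpace ℝ (Fin (n - p + k - q)) =>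
      innerWeight q l k p n w := by
    unfold innerWeight blockSq
    fun_prop
  refine .subtype_mk (continuous_assemble.comp (.prodMk ?_ (.prodMk ?_ ?_))) _ <;> fun_prop

def quadR3HomeomorphSpheres (h : Admissible q l k p n) :
    quadR3 q l k p n ≃ₜ SphereTriple q k p n where
  toFun := h.toSpheres
  invFun := h.ofSpheres
  left_inv := h.ofSpheres_toSpheres
  right_inv := h.toSpheres_ofSpheres
  continuous_toFun := h.continuous_toSpheres
  continuous_invFun := h.continuous_ofSpheres

end Admissible

end Chart

section TorusAction

abbrev Torus3 : Type := sphere (0 : ℂ) 1 × sphere (0 : ℂ) 1 × sphere (0 : ℂ) 1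

variable {q l k p n : ℕ}

/-- The phase by which `t ∈ T³` rotates the coordinate pair `(2i, 2i+1)`: the three circle
factors rotate the blocks `[q, l) ∪ [p, n)`, `[l, k)` and `[k, p)`, and their product the block
`[0, q)`. -/
def blockPhase (q l k p : ℕ) (t : Torus3) (i : ℕ) : ℂ :=
  if 2 * i < q then t.1 * t.2.1 * t.2.2
  else if 2 * i < l then t.1
  else if 2 * i < k then t.2.1
  else if 2 * i < p then t.2.2
  else t.1

theorem blockPhase_mul (s t : Torus3) :
    blockPhase q l k p (s * t) = blockPhase q l k p s * blockPhase q l k p t := by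
  funext i
  simp only [blockPhase, Pi.mul_apply, Prod.fst_mul, Prod.snd_mul, unitSphere.coe_mul]
  split_ifs <;> ring

theorem blockPhase_one : blockPhase q l k p 1 = 1 := by
  funext i
  simp only [blockPhase, Prod.fst_one, Prod.snd_one, unitSphere.coe_one, Pi.one_apply]
  split_ifs <;> ring

theorem normSq_blockPhase (t : Torus3) (i : ℕ) : Complex.normSq (blockPhase q l k p t i) = 1 := by
  have h (z : sphere (0 : ℂ) 1) : Complex.normSq z = 1 := by
    rw [Complex.normSq_eq_norm_sq, norm_eq_of_mem_sphere, one_pow]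
  simp only [blockPhase]
  split_ifs <;> simp [h]

def torusSmul (q l k p : ℕ) (t : Torus3) (u : EuclideanSpace ℝ (Fin n)) :
    EuclideanSpace ℝ (Fin n) :=
  WithLp.toLp 2 fun j => rotatePairs (blockPhase q l k p t) (zeroExtend u) j

theorem zeroExtend_torusSmul (hn : Even n) (t : Torus3) (u : EuclideanSpace ℝ (Fin n)) :
    zeroExtend (torusSmul q l k p t u) = rotatePairs (blockPhase q l k p t) (zeroExtend u) := by
  funext j
  by_cases hj : j < n
  · exact zeroExtend_toLp _ hj
  · rw [zeroExtend_of_le _ (not_lt.mp hj),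
      rotatePairs_eq_zero_of_le hn (fun _ => zeroExtend_of_le u) _ (not_lt.mp hj)]

@[reducible]
def torusAction (q l k p : ℕ) (hn : Even n) : MulAction Torus3 (EuclideanSpace ℝ (Fin n)) where
  smul := torusSmul q l k p
  one_smul u := by
    change torusSmul q l k p 1 u = u
    ext j
    simp [torusSmul, blockPhase_one, rotatePairs_one]
  mul_smul s t u := by
    change torusSmul q l k p (s * t) u = torusSmul q l k p s (torusSmul q l k p t u)
    ext j
    rw [torusSmul, PiLp.toLp_apply, blockPhase_mul, rotatePairs_mul, ← zeroExtend_torusSmul hn]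
    rfl

theorem continuous_torusSmul :
    Continuous fun x : Torus3 × EuclideanSpace ℝ (Fin n) => torusSmul q l k p x.1 x.2 := by
  have hphase (i : ℕ) : Continuous fun t : Torus3 => blockPhase q l k p t i := by
    unfold blockPhase
    split_ifs <;> fun_prop
  refine (PiLp.continuous_toLp 2 _).comp (continuous_pi fun j => ?_)
  simp only [rotatePairs, ofPairs, toPairs, Pi.mul_apply, Complex.mk_eq_add_mul_I]
  split_ifs <;> fun_prop

theorem torusSmul_mem_quadR3 (hq : Even q) (hl : Even l) (hk : Even k) (hp : Even p)
    (hn : Even n) (hql : q ≤ l) (hlk : l ≤ k) (hkp : k ≤ p) (hpn : p ≤ n) (t : Torus3)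
    {u : EuclideanSpace ℝ (Fin n)} (hu : u ∈ quadR3 q l k p n) :
    torusSmul q l k p t u ∈ quadR3 q l k p n := by
  have hblock {s e : ℕ} (hs : Even s) (he : Even e) :
      blockSq (zeroExtend (torusSmul q l k p t u)) s e = blockSq (zeroExtend u) s e := by
    rw [zeroExtend_torusSmul hn]
    exact sum_Ico_sq_rotatePairs (normSq_blockPhase t) _ hs he
  rw [mem_quadR3_iff hql hlk hkp hpn] at hu ⊢
  rwa [hblock hq hl, hblock hl hk, hblock hp hn, hblock Even.zero hq, hblock hk hp]

def signs (s₁ s₂ s₃ : Bool) : Torus3 := (cond s₁ (-1) 1, cond s₂ (-1) 1, cond s₃ (-1) 1)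

theorem torus3_sq_eq_one_iff (ε : Torus3) : ε ^ 2 = 1 ↔ ∃ s₁ s₂ s₃, ε = signs s₁ s₂ s₃ := by
  obtain ⟨ε₁, ε₂, ε₃⟩ := ε
  simp only [Prod.ext_iff, Prod.pow_fst, Prod.pow_snd, Prod.fst_one, Prod.snd_one,
    unitSphere_sq_eq_one_iff_exists_cond, signs]
  constructor
  · rintro ⟨⟨s₁, h₁⟩, ⟨s₂, h₂⟩, ⟨s₃, h₃⟩⟩
    exact ⟨s₁, s₂, s₃, h₁, h₂, h₃⟩
  · rintro ⟨s₁, s₂, s₃, h₁, h₂, h₃⟩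
    exact ⟨⟨s₁, h₁⟩, ⟨s₂, h₂⟩, ⟨s₃, h₃⟩⟩

theorem torus3_exists_sq_eq (w : Torus3) : ∃ z : Torus3, z ^ 2 = w := by
  obtain ⟨z₁, h₁⟩ := exists_sq_eq_of_unitSphere w.1
  obtain ⟨z₂, h₂⟩ := exists_sq_eq_of_unitSphere w.2.1
  obtain ⟨z₃, h₃⟩ := exists_sq_eq_of_unitSphere w.2.2
  exact ⟨(z₁, z₂, z₃), Prod.ext h₁ (Prod.ext h₂ h₃)⟩

theorem torusSmul_signs_apply (s₁ s₂ s₃ : Bool) (u : EuclideanSpace ℝ (Fin n)) (j : Fin n) :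
    torusSmul q l k p (signs s₁ s₂ s₃) u j
      = (blockPhase q l k p (signs s₁ s₂ s₃) (j / 2)).re * u j := by
  rw [torusSmul, PiLp.toLp_apply, rotatePairs_apply_of_im_eq_zero _ _ j, zeroExtend_val]
  intro i
  simp only [blockPhase, signs]
  split_ifs <;> cases s₁ <;> cases s₂ <;> cases s₃ <;> simp

theorem gen5_cond_apply (hq : Even q) (hl : Even l) (hk : Even k) (hp : Even p)
    (hql : q ≤ l) (hlk : l ≤ k) (hkp : k ≤ p) (s₁ s₂ s₃ : Bool)
    (x : EuclideanSpace ℝ (Fin n) × ℂ × ℂ × ℂ) :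
    (cond s₁ (gen5₁ q l k p n) id) ((cond s₂ (gen5₂ q l k p n) id)
        ((cond s₃ (gen5₃ q l k p n) id) x))
      = (torusSmul q l k p (signs s₁ s₂ s₃) x.1, ((signs s₁ s₂ s₃).1 : ℂ) * x.2.1,
          ((signs s₁ s₂ s₃).2.1 : ℂ) * x.2.2.1, ((signs s₁ s₂ s₃).2.2 : ℂ) * x.2.2.2) := by
  have hlt {a : ℕ} (ha : Even a) (j : ℕ) : 2 * (j / 2) < a ↔ j < a := by
    obtain ⟨b, rfl⟩ := ha
    omega
  obtain ⟨u, z₁, z₂, z₃⟩ := x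
  refine Prod.ext ?_ ?_
  · ext j
    rw [torusSmul_signs_apply]
    simp only [blockPhase, hlt hq, hlt hl, hlt hk, hlt hp]
    cases s₁ <;> cases s₂ <;> cases s₃ <;>
      simp only [signs, gen5₁, gen5₂, gen5₃, cond_true, cond_false, id, PiLp.toLp_apply] <;>
      split_ifs <;> first | omega | simp
  · cases s₁ <;> cases s₂ <;> cases s₃ <;> simp [signs, gen5₁, gen5₂, gen5₃]

end TorusAction

section Quotient

variable {q l k p n : ℕ}

def toProdTorus3 (x : totalSpace5 q l k p n) : EuclideanSpace ℝ (Fin n) × Torus3 :=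
  (x.1.1, ⟨x.1.2.1, x.2.2.1⟩, ⟨x.1.2.2.1, x.2.2.2.1⟩, ⟨x.1.2.2.2, x.2.2.2.2⟩)

theorem continuous_toProdTorus3 : Continuous (toProdTorus3 : totalSpace5 q l k p n → _) := by
  unfold toProdTorus3
  fun_prop

theorem orbitRel5_iff (hq : Even q) (hl : Even l) (hk : Even k) (hp : Even p)
    (hql : q ≤ l) (hlk : l ≤ k) (hkp : k ≤ p) (a b : totalSpace5 q l k p n) :
    orbitRel5 q l k p n a b ↔
      ∃ ε : Torus3, ε ^ 2 = 1 ∧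
        toProdTorus3 b = (torusSmul q l k p ε (toProdTorus3 a).1, ε * (toProdTorus3 a).2) := by
  simp only [orbitRel5, gen5_cond_apply hq hl hk hp hql hlk hkp, torus3_sq_eq_one_iff]
  constructor
  · rintro ⟨s₁, s₂, s₃, h⟩
    refine ⟨_, ⟨s₁, s₂, s₃, rfl⟩, ?_⟩
    simp [toProdTorus3, h, Prod.ext_iff, Subtype.ext_iff]
  · rintro ⟨_, ⟨s₁, s₂, s₃, rfl⟩, h⟩
    refine ⟨s₁, s₂, s₃, ?_⟩
    simp only [toProdTorus3, Prod.ext_iff, Subtype.ext_iff, Prod.fst_mul, Prod.snd_mul,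
      unitSphere.coe_mul] at h
    obtain ⟨h₁, h₂, h₃, h₄⟩ := h
    exact Prod.ext h₁ (Prod.ext h₂ (Prod.ext h₃ h₄))

theorem compactSpace_totalSpace5 (h : Admissible q l k p n) :
    CompactSpace (totalSpace5 q l k p n) := by
  have : CompactSpace (quadR3 q l k p n) := h.quadR3HomeomorphSpheres.symm.compactSpace
  exact isCompact_iff_compactSpace.mp <| (isCompact_iff_compactSpace.mpr this).prod <|
    (isCompact_sphere _ _).prod <| (isCompact_sphere _ _).prod (isCompact_sphere _ _)

section

variable (hq : Even q) (hl : Even l) (hk : Even k) (hp : Even p) (hn : Even n)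
  (h : Admissible q l k p n)

def untwistQuadR3 (x : totalSpace5 q l k p n) : quadR3 q l k p n × Torus3 :=
  letI := torusAction q l k p hn
  (⟨(untwist (toProdTorus3 x)).1, torusSmul_mem_quadR3 hq hl hk hp hn h.q_lt_l.le h.l_lt_k.le
    h.k_lt_p.le h.p_lt_n.le _ x.2.1⟩, (untwist (toProdTorus3 x)).2)

theorem untwistQuadR3_eq_iff (a b : totalSpace5 q l k p n) :
    untwistQuadR3 hq hl hk hp hn h a = untwistQuadR3 hq hl hk hp hn h b ↔
      orbitRel5 q l k p n a b := by
  let _ := torusAction q l k p hn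
  refine Iff.trans ?_ (orbitRel5_iff hq hl hk hp h.q_lt_l.le h.l_lt_k.le h.k_lt_p.le a b).symm
  refine Iff.trans ?_ untwist_eq_untwist_iff
  simp only [untwistQuadR3, Prod.ext_iff, Subtype.ext_iff]

theorem untwistQuadR3_surjective : Function.Surjective (untwistQuadR3 hq hl hk hp hn h) := by
  let _ := torusAction q l k p hn
  rintro ⟨⟨y, hy⟩, w⟩
  obtain ⟨z, rfl⟩ := torus3_exists_sq_eq w
  have hzy := torusSmul_mem_quadR3 hq hl hk hp hn h.q_lt_l.le h.l_lt_k.le h.k_lt_p.le h.p_lt_n.le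
    z hy
  refine ⟨⟨(torusSmul q l k p z y, z.1, z.2.1, z.2.2), hzy, z.1.2, z.2.1.2, z.2.2.2⟩, ?_⟩
  have := untwist_smul_mk y z
  simp only [untwistQuadR3, Prod.ext_iff, Subtype.ext_iff] at this ⊢
  exact this

theorem continuous_untwistQuadR3 : Continuous (untwistQuadR3 hq hl hk hp hn h) :=
  .prodMk (.subtype_mk (continuous_torusSmul.comp (continuous_toProdTorus3.snd.inv.prodMk
    continuous_toProdTorus3.fst)) _) (continuous_toProdTorus3.snd.pow 2)

theorem bijective_quotLift_untwistQuadR3 :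
    Function.Bijective (Quot.lift (untwistQuadR3 hq hl hk hp hn h)
      fun a b => (untwistQuadR3_eq_iff hq hl hk hp hn h a b).mpr) := by
  refine ⟨?_, fun y => ?_⟩
  · rintro ⟨a⟩ ⟨b⟩ hab
    exact Quot.sound ((untwistQuadR3_eq_iff hq hl hk hp hn h a b).mp hab)
  · obtain ⟨x, rfl⟩ := untwistQuadR3_surjective hq hl hk hp hn h y
    exact ⟨Quot.mk _ x, rfl⟩

def quotOrbitRel5Homeomorph : Quot (orbitRel5 q l k p n) ≃ₜ quadR3 q l k p n × Torus3 :=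
  have := compactSpace_totalSpace5 h
  (continuous_quot_lift _ (continuous_untwistQuadR3 hq hl hk hp hn h)).homeoOfEquivCompactToT2
    (f := .ofBijective _ (bijective_quotLift_untwistQuadR3 hq hl hk hp hn h))

end

end Quotient

end

theorem stmt5_general (q l k p n : ℕ) (hql : q < l) (hlk : l < k) (hkp : k < p)
    (hpn : p < n) (hklq : k < l + q) (hineq : n + k + l < 2 * p + q)
    (hqe : Even q) (hle : Even l) (hke : Even k) (hpe : Even p) (hne : Even n) :
    Nonempty (Quot (orbitRel5 q l k p n) ≃ₜ
      sphere (0 : EuclideanSpace ℝ (Fin (n - p + k - q))) 1 ×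
      sphere (0 : EuclideanSpace ℝ (Fin (p - k))) 1 ×
      sphere (0 : EuclideanSpace ℝ (Fin q)) 1 ×
      sphere (0 : ℂ) 1 × sphere (0 : ℂ) 1 × sphere (0 : ℂ) 1) := by
  have h : Admissible q l k p n := ⟨hql, hlk, hkp, hpn, hklq, hineq⟩
  exact ⟨(quotOrbitRel5Homeomorph hqe hle hke hpe hne h).trans <|
    (h.quadR3HomeomorphSpheres.prodCongr (.refl Torus3)).trans <|
      (Homeomorph.prodAssoc _ _ _).trans ((Homeomorph.refl _).prodCongr (.prodAssoc _ _ _))⟩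

/-- For even positive `q, l, k, p, n`, the orbit space `(R₃ × S¹ × S¹ × S¹)/(ℤ/2)³` is
homeomorphic to `S^{n-p+k-q-1} × S^{p-k-1} × S^{q-1} × S¹ × S¹ × S¹`. -/
theorem stmt5 (q l k p n : ℕ) (hq : 0 < q) (hql : q < l) (hlk : l < k) (hkp : k < p)
    (hpn : p < n) (hklq : k < l + q) (hineq : n + k + l < 2 * p + q)
    (hqe : Even q) (hle : Even l) (hke : Even k) (hpe : Even p) (hne : Even n) :
    Nonempty (Quot (orbitRel5 q l k p n) ≃ₜ
      sphere (0 : EuclideanSpace ℝ (Fin (n - p + k - q))) 1 ×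
      sphere (0 : EuclideanSpace ℝ (Fin (p - k))) 1 ×
      sphere (0 : EuclideanSpace ℝ (Fin q)) 1 ×
      sphere (0 : ℂ) 1 × sphere (0 : ℂ) 1 × sphere (0 : ℂ) 1) :=
  stmt5_general q l k p n hql hlk hkp hpn hklq hineq hqe hle hke hpe hne
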